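/- Let A, B, C be real numbers with B > 0 and C < 0, and suppose the quartic polynomial P(X) = X^4 + A X^2 + B X + C has four real roots r1, r2, r3, r4, i.e. P(X) = (X - r1)(X - r2)(X - r3)(X - r4) as polynomials over the reals. Then exactly one of r1, r2, r3, r4 is negative and the other three are strictly positive (in particular no root is zero). -/

import Mathlib

/-!
By Vieta, the roots have sum `0`, triple-product sum `-B < 0` and product `C < 0`. The product
being negative gives a negative root and excludes the root `0`. Two negative roots `a, b` are
impossible: then `c + d = -(a + b) > 0` and `cd < 0`, so the triple-product sum
`ab(c + d) + cd(a + b)` would be positive.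
-/

open Finset

lemma vieta_quartic {A B C : ℝ} {r : Fin 4 → ℝ}
    (hfact : ∀ x : ℝ, x ^ 4 + A * x ^ 2 + B * x + C = ∏ i, (x - r i)) :
    r 0 + r 1 + r 2 + r 3 = 0 ∧
      r 0 * r 1 * r 2 + r 0 * r 1 * r 3 + r 0 * r 2 * r 3 + r 1 * r 2 * r 3 = -B ∧
      r 0 * r 1 * r 2 * r 3 = C := by
  have h0 := hfact 0
  have h1 := hfact 1
  have hm1 := hfact (-1)
  have h2 := hfact 2
  have hm2 := hfact (-2)
  simp only [Fin.prod_univ_four] at h0 h1 hm1 h2 hm2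
  refine ⟨?_, ?_, ?_⟩
  · linear_combination (1/12) * h2 - (1/12) * hm2 - (1/6) * h1 + (1/6) * hm1
  · linear_combination (2/3) * h1 - (2/3) * hm1 - (1/12) * h2 + (1/12) * hm2
  · linear_combination -h0

lemma triple_sum_pos_of_two_neg {a b c d : ℝ} (hsum : a + b + c + d = 0)
    (hprod : a * b * c * d < 0) (ha : a < 0) (hb : b < 0) :
    0 < a * b * c + a * b * d + a * c * d + b * c * d := by
  have hab : 0 < a * b := mul_pos_of_neg_of_neg ha hb
  have hcd : c * d < 0 := by
    by_contra! h
    nlinarith [mul_nonneg hab.le h]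
  calc 0 < a * b * (c + d) + c * d * (a + b) :=
        add_pos (mul_pos hab (by linarith)) (mul_pos_of_neg_of_neg hcd (by linarith))
    _ = _ := by ring

lemma exists_perm_apply_zero_apply_one {n : ℕ} {i j : Fin (n + 2)} (hij : i ≠ j) :
    ∃ σ : Equiv.Perm (Fin (n + 2)), σ 0 = i ∧ σ 1 = j := by
  refine ⟨Equiv.swap 0 i * Equiv.swap 1 (Equiv.swap 0 i j), ?_, ?_⟩
  · have hj : Equiv.swap 0 i j ≠ 0 := by
      rw [Ne, Equiv.swap_apply_eq_iff, Equiv.swap_apply_left]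
      exact hij.symm
    simp [Equiv.swap_apply_of_ne_of_ne (Fin.zero_ne_one) hj.symm]
  · simp

lemma not_two_neg_roots_of_quartic {A B C : ℝ} (hB : 0 < B) (hC : C < 0) {r : Fin 4 → ℝ}
    (hfact : ∀ x : ℝ, x ^ 4 + A * x ^ 2 + B * x + C = ∏ i, (x - r i))
    {i j : Fin 4} (hij : i ≠ j) (hi : r i < 0) (hj : r j < 0) : False := by
  obtain ⟨σ, hσ0, hσ1⟩ := exists_perm_apply_zero_apply_one hij
  have hfactσ : ∀ x : ℝ, x ^ 4 + A * x ^ 2 + B * x + C = ∏ k, (x - (r ∘ σ) k) := fun x => by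
    rw [hfact x]
    exact (Equiv.prod_comp σ fun k => x - r k).symm
  obtain ⟨hsum, htriple, hprod⟩ := vieta_quartic hfactσ
  simp only [Function.comp_apply, hσ0, hσ1] at hsum htriple hprod
  have := triple_sum_pos_of_two_neg hsum (hprod ▸ hC) hi hj
  linarith

lemma card_filter_neg_add_card_filter_pos {ι : Type*} [Fintype ι] {r : ι → ℝ}
    (hne : ∀ i, r i ≠ 0) :
    (univ.filter fun i => r i < 0).card + (univ.filter fun i => 0 < r i).card =
      Fintype.card ι := by
  have hpos_eq : (univ.filter fun i => 0 < r i) = univ.filter fun i => ¬ r i < 0 :=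
    filter_congr fun i _ => by simp [lt_iff_le_and_ne, hne i, eq_comm]
  rw [hpos_eq, card_filter_add_card_filter_not, card_univ]

theorem stmt0 (A B C : ℝ) (hB : 0 < B) (hC : C < 0) (r : Fin 4 → ℝ)
    (hfact : ∀ x : ℝ, x ^ 4 + A * x ^ 2 + B * x + C = ∏ i, (x - r i)) :
    (Finset.univ.filter fun i => r i < 0).card = 1 ∧
      (Finset.univ.filter fun i => 0 < r i).card = 3 := by
  have hprod : ∏ i, r i = C := by
    rw [Fin.prod_univ_four]
    exact (vieta_quartic hfact).2.2
  have hne : ∀ i, r i ≠ 0 :=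
    fun i => prod_ne_zero_iff.mp (hprod ▸ hC.ne) i (mem_univ i)
  have hneg_nonempty : (univ.filter fun i => r i < 0).Nonempty := by
    by_contra! h
    have hnonneg : ∀ i ∈ univ, 0 ≤ r i := fun i _ => by
      simpa using filter_eq_empty_iff.mp h (mem_univ i)
    linarith [prod_nonneg hnonneg]
  have hneg_card : (univ.filter fun i => r i < 0).card = 1 := by
    refine le_antisymm (card_le_one.mpr fun i hi j hj => ?_) hneg_nonempty.card_pos
    by_contra hij
    exact not_two_neg_roots_of_quartic hB hC hfact hij (mem_filter.mp hi).2 (mem_filter.mp hj).2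
  have hsplit := card_filter_neg_add_card_filter_pos hne
  rw [hneg_card, Fintype.card_fin] at hsplit
  exact ⟨hneg_card, by omega⟩
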